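/- Let w be an ε-Beck word for some ε < 1 (all occurrences of every factor of length n > N_ε are separated by distance at least (2−ε)^n). Then w is not closed-rich: for every constant C > 0, every sufficiently long factor of w of length m contains fewer than C·m² closed factors; in fact, any factor of length m contains at most m·log_{2−ε}(m) closed factor occurrences that are rightmost occurrences. -/

import Mathlib

open List

variable {α : Type*}

/-- Number of occurrences of `u` as a factor of `w` (by starting position). -/
def occCount [DecidableEq α] (u w : List α) : ℕ :=
  ((Finset.range (w.length + 1)).filter
    (fun i => i + u.length ≤ w.length ∧ (w.drop i).take u.length = u)).card

/-- A finite word is closed if it has length ≤ 1 or it has a border occurring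
exactly twice in it (as prefix and as suffix). -/
def ClosedWord [DecidableEq α] (w : List α) : Prop :=
  w.length ≤ 1 ∨ ∃ k ∈ Finset.Ioo 0 w.length,
    (w.take k) <:+ w ∧ occCount (w.take k) w = 2

instance [DecidableEq α] (w : List α) : Decidable (ClosedWord w) := by
  unfold ClosedWord; infer_instance

/-- The finite set of distinct closed factors of `w`. -/
def closedFactors [DecidableEq α] (w : List α) : Finset (List α) :=
  (w.inits.flatMap List.tails).toFinset.filter ClosedWord

/-- The number of distinct closed factors of `w`. -/
def clCount [DecidableEq α] (w : List α) : ℕ := (closedFactors w).card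

/-- `t` is a period of the finite word `w`. -/
def HasPeriod (w : List α) (t : ℕ) : Prop := 0 < t ∧ w.drop t <+: w

/-- Factor of the infinite word `w` starting at `i` of length `m`. -/
def factorAt (w : ℕ → α) (i m : ℕ) : List α := (List.range m).map (fun j => w (i + j))

/-- `u` occurs in the infinite word `w` at position `i`. -/
def occursAt (w : ℕ → α) (u : List α) (i : ℕ) : Prop := factorAt w i u.length = u

/-- An infinite word is aperiodic if it is not eventually periodic. -/
def Aperiodic' (w : ℕ → α) : Prop := ¬ ∃ p, 0 < p ∧ ∃ N, ∀ n ≥ N, w (n + p) = w n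

/-- A finite word is primitive if it is not an integer power of a shorter word. -/
def Primitive (u : List α) : Prop :=
  u ≠ [] ∧ ∀ (v : List α) (k : ℕ), 2 ≤ k → u ≠ (List.replicate k v).flatten

/-!
A closed factor `u` of a word `v` with `|u| ≥ 2` is determined by the end of one of its
occurrences in `v` together with the length `k` of a border of `u` occurring exactly twice in `u`:
if two such factors ended at the same place and had the same `k`, the shorter one would be a
proper suffix of the longer one, and the common border would occur a third time in the longer one.
So `v` has at most `|v| · K + O(1)` closed factors, where `K` bounds these border lengths. In a
Beck word the prefix and suffix occurrences of a border of length `k > N` of a factor of length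
`≤ m` lie at distance at least `(2 - ε) ^ k`, whence `k ≤ log_{2-ε} m`, and the count is
`O(m log m) = o(m²)`.
-/

open Filter

theorem List.IsSuffix.eq_of_suffix_of_length_eq {l₁ l₂ l : List α} (h₁ : l₁ <:+ l)
    (h₂ : l₂ <:+ l) (hl : l₁.length = l₂.length) : l₁ = l₂ :=
  (List.suffix_of_suffix_length_le h₁ h₂ hl.le).eq_of_length hl

theorem card_filter_length_le_one_le [Fintype α] (S : Finset (List α)) :
    (S.filter (fun u => u.length ≤ 1)).card ≤ Fintype.card α + 1 := by
  rw [← Fintype.card_option, ← Finset.card_univ]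
  refine Finset.card_le_card_of_injOn List.head? (fun _ _ => Finset.mem_univ _) ?_
  intro u hu u' hu' h
  simp only [Finset.coe_filter, Set.mem_ofPred_eq] at hu hu'
  match u, u', hu.2, hu'.2, h with
  | [], [], _, _, _ => rfl
  | [_], [_], _, _, h => simpa using h
  | [], [_], _, _, h => simp at h
  | [_], [], _, _, h => simp at h

def IsClosingBorder [DecidableEq α] (u : List α) (k : ℕ) : Prop :=
  0 < k ∧ k < u.length ∧ u.take k <:+ u ∧ occCount (u.take k) u = 2

section Closed

variable [DecidableEq α]

theorem closedWord_iff {u : List α} :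
    ClosedWord u ↔ u.length ≤ 1 ∨ ∃ k, IsClosingBorder u k := by
  simp only [ClosedWord, IsClosingBorder, Finset.mem_Ioo, and_assoc]

theorem mem_closedFactors_iff {u v : List α} :
    u ∈ closedFactors v ↔ u <:+: v ∧ ClosedWord u := by
  simp only [closedFactors, Finset.mem_filter, List.mem_toFinset, List.mem_flatMap,
    List.mem_inits, List.mem_tails, List.infix_iff_suffix_prefix, and_comm]

theorem three_le_occCount {p u : List α} {i j k : ℕ} (hi : p <+: u.drop i)
    (hj : p <+: u.drop j) (hk : p <+: u.drop k) (hij : i < j) (hjk : j < k)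
    (hku : k ≤ u.length) : 3 ≤ occCount p u := by
  have mem : ∀ l ≤ k, p <+: u.drop l → l ∈ (Finset.range (u.length + 1)).filter
      (fun i => i + p.length ≤ u.length ∧ (u.drop i).take p.length = p) := by
    intro l hl hp
    have := hp.length_le
    simp only [List.length_drop] at this
    exact Finset.mem_filter.mpr ⟨Finset.mem_range.mpr (by omega), by omega,
      (List.prefix_iff_eq_take.mp hp).symm⟩
  exact Finset.two_lt_card_iff.mpr ⟨i, j, k, mem i (by omega) hi, mem j (by omega) hj,
    mem k le_rfl hk, by omega, by omega, by omega⟩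

theorem eq_of_isClosingBorder_of_suffix {u u' x : List α} {k : ℕ} (hu : u <:+ x)
    (hu' : u' <:+ x) (hk : IsClosingBorder u k) (hk' : IsClosingBorder u' k) : u = u' := by
  wlog hle : u.length ≤ u'.length generalizing u u'
  · exact (this hu' hu hk' hk (by omega)).symm
  obtain ⟨hk0, hku, hsuf, -⟩ := hk
  obtain ⟨-, hku', hsuf', hocc'⟩ := hk'
  rcases hle.lt_or_eq with hlt | heq
  · have hborder : u.take k = u'.take k :=
      (hsuf.trans hu).eq_of_suffix_of_length_eq (hsuf'.trans hu') (by simp only [List.length_take]; omega)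
    have hstart : u'.drop (u'.length - u.length) = u :=
      (List.suffix_iff_eq_drop.mp (List.suffix_of_suffix_length_le hu hu' hle)).symm
    have hend : u'.drop (u'.length - k) = u'.take k := by
      have := List.suffix_iff_eq_drop.mp hsuf'
      rw [List.length_take, Nat.min_eq_left hku'.le] at this
      exact this.symm
    have := three_le_occCount (p := u'.take k) (i := 0) (j := u'.length - u.length)
      (k := u'.length - k) (by simpa using List.take_prefix k u')
      (by rw [hstart, ← hborder]; exact List.take_prefix k u)
      (by rw [hend]) (by omega) (by omega) (by omega)
    omega
  · exact hu.eq_of_suffix_of_length_eq hu' heq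

theorem clCount_le [Fintype α] (v : List α) (K : ℕ)
    (hK : ∀ u, u <:+: v → ∀ k, IsClosingBorder u k → k ≤ K) :
    clCount v ≤ (v.length - 1) * K + (Fintype.card α + 1) := by
  set S := closedFactors v
  have hlong : (S.filter (fun u => ¬ u.length ≤ 1)).card ≤ (v.length - 1) * K := by
    have hbox : (Finset.Ioc 1 v.length ×ˢ Finset.Icc 1 K).card = (v.length - 1) * K := by
      simp only [Finset.card_product, Nat.card_Ioc, Nat.card_Icc, Nat.add_sub_cancel]
    rw [← hbox]
    refine Finset.card_le_card_of_forall_subsingleton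
      (fun u ek => u <:+ v.take ek.1 ∧ IsClosingBorder u ek.2) ?_ ?_
    · intro u hu
      obtain ⟨hu, hlen⟩ := Finset.mem_filter.mp hu
      obtain ⟨hinf, hcl⟩ := mem_closedFactors_iff.mp hu
      obtain ⟨t, hut, htv⟩ := List.infix_iff_suffix_prefix.mp hinf
      obtain ⟨k, hk⟩ := (closedWord_iff.mp hcl).resolve_left hlen
      have hvt : v.take t.length = t := (List.prefix_iff_eq_take.mp htv).symm
      have := hut.length_le
      have := htv.length_le
      refine ⟨(t.length, k), ?_, by rw [hvt]; exact hut, hk⟩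
      simp only [Finset.mem_product, Finset.mem_Ioc, Finset.mem_Icc]
      exact ⟨⟨by omega, by omega⟩, hk.1, hK u hinf k hk⟩
    · rintro ⟨e, k⟩ - u ⟨-, hu, hk⟩ u' ⟨-, hu', hk'⟩
      exact eq_of_isClosingBorder_of_suffix hu hu' hk hk'
  calc clCount v = (S.filter (fun u => u.length ≤ 1)).card
        + (S.filter (fun u => ¬ u.length ≤ 1)).card :=
        (Finset.card_filter_add_card_filter_not _).symm
    _ ≤ (Fintype.card α + 1) + (v.length - 1) * K :=
        add_le_add (card_filter_length_le_one_le S) hlong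
    _ = (v.length - 1) * K + (Fintype.card α + 1) := add_comm _ _

end Closed

section Beck

variable (w : ℕ → α)

@[simp] theorem length_factorAt (i m : ℕ) : (factorAt w i m).length = m := by
  simp [factorAt]

theorem factorAt_take (i m e : ℕ) (h : e ≤ m) :
    (factorAt w i m).take e = factorAt w i e := by
  simp [factorAt, ← List.map_take, List.take_range, Nat.min_eq_left h]

theorem factorAt_drop (i m d : ℕ) :
    (factorAt w i m).drop d = factorAt w (i + d) (m - d) := by
  apply List.ext_getElem <;> simp [factorAt, Nat.add_assoc]

variable {w}

theorem exists_eq_factorAt_of_infix {u : List α} {i m : ℕ} (h : u <:+: factorAt w i m) :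
    ∃ s, u = factorAt w s u.length := by
  obtain ⟨a, b, hab⟩ := h
  have hlen := congrArg List.length hab
  simp only [List.length_append, length_factorAt] at hlen
  refine ⟨i + a.length, ?_⟩
  calc u = ((a ++ u ++ b).drop a.length).take u.length := by simp
    _ = factorAt w (i + a.length) u.length := by
        rw [hab, factorAt_drop, factorAt_take _ _ _ _ (by omega)]

theorem factorAt_eq_of_border {s n k : ℕ} (hk : k ≤ n)
    (h : (factorAt w s n).take k <:+ factorAt w s n) :
    factorAt w s k = factorAt w (s + (n - k)) k := by
  have := List.suffix_iff_eq_drop.mp h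
  rwa [factorAt_take w s n k hk, length_factorAt, length_factorAt, factorAt_drop,
    Nat.sub_sub_self hk] at this

def IsBeck (w : ℕ → α) (b : ℝ) (N : ℕ) : Prop :=
  ∀ n : ℕ, N < n → ∀ i j : ℕ, factorAt w i n = factorAt w j n → i < j → b ^ n ≤ (j : ℝ) - (i : ℝ)

variable [DecidableEq α] {b : ℝ} {N : ℕ}

theorem IsBeck.pow_le_of_isClosingBorder (hw : IsBeck w b N) {u : List α} {i m k : ℕ}
    (hu : u <:+: factorAt w i m) (hk : IsClosingBorder u k) (hNk : N < k) : b ^ k ≤ m := by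
  obtain ⟨s, hs⟩ := exists_eq_factorAt_of_infix hu
  obtain ⟨hk0, hku, hsuf, -⟩ := hk
  rw [hs] at hsuf
  have hrepeat := hw k hNk s (s + (u.length - k))
    (factorAt_eq_of_border (by omega) hsuf) (by omega)
  calc b ^ k ≤ ((s + (u.length - k) : ℕ) : ℝ) - s := hrepeat
    _ = ((u.length - k : ℕ) : ℝ) := by push_cast; ring
    _ ≤ m := by exact_mod_cast (by have := hu.length_le; simp only [length_factorAt] at this; omega)

theorem IsBeck.le_max_logb_of_isClosingBorder (hb : 1 < b) (hw : IsBeck w b N)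
    {u : List α} {i m k : ℕ} (hu : u <:+: factorAt w i m) (hk : IsClosingBorder u k) :
    k ≤ max N ⌊Real.logb b m⌋₊ := by
  rcases le_or_gt k N with hkN | hNk
  · exact le_max_of_le_left hkN
  refine le_max_of_le_right (Nat.le_floor ?_)
  have hpow := hw.pow_le_of_isClosingBorder hu hk hNk
  rw [Real.le_logb_iff_rpow_le hb (lt_of_lt_of_le (by positivity) hpow), Real.rpow_natCast]
  exact hpow

theorem IsBeck.clCount_factorAt_le [Fintype α] (hb : 1 < b) (hw : IsBeck w b N) (i m : ℕ)
    (hN : N ≤ Real.logb b m) (hα : Fintype.card α + 1 ≤ Real.logb b m) :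
    (clCount (factorAt w i m) : ℝ) ≤ m * Real.logb b m := by
  set L := Real.logb b m
  have hm : 1 ≤ m := by
    by_contra! h
    simp only [L, Nat.lt_one_iff.mp h, Nat.cast_zero, Real.logb_zero] at hα
    linarith
  have hK : ((max N ⌊L⌋₊ : ℕ) : ℝ) ≤ L := by
    push_cast
    exact max_le hN (Nat.floor_le (by linarith))
  have hcount := clCount_le (factorAt w i m) (max N ⌊L⌋₊)
    (fun u hu k hk => hw.le_max_logb_of_isClosingBorder hb hu hk)
  rw [length_factorAt] at hcount
  calc (clCount (factorAt w i m) : ℝ)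
      ≤ ((m - 1 : ℕ) : ℝ) * ((max N ⌊L⌋₊ : ℕ) : ℝ) + (Fintype.card α + 1) := by
        exact_mod_cast hcount
    _ ≤ (m - 1) * L + L := by
        rw [Nat.cast_sub hm, Nat.cast_one]
        gcongr
        exact sub_nonneg.mpr (by exact_mod_cast hm)
    _ = m * L := by ring

end Beck

theorem eventually_le_logb_and_mul_logb_lt {b C : ℝ} (hb : 1 < b) (hC : 0 < C) (A : ℝ) :
    ∀ᶠ m : ℕ in atTop, A ≤ Real.logb b m ∧ (m : ℝ) * Real.logb b m < C * (m : ℝ) ^ 2 := by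
  have hlarge := (Real.tendsto_logb_atTop hb).comp tendsto_natCast_atTop_atTop
  have hsmall := (Real.isLittleO_logb_id_atTop (b := b)).natCast_atTop.def (half_pos hC)
  filter_upwards [hlarge.eventually_ge_atTop A, hsmall, eventually_gt_atTop 0]
    with m hA hlog hm
  have hm' : (0 : ℝ) < m := by exact_mod_cast hm
  refine ⟨hA, ?_⟩
  have : Real.logb b m < C * m := by
    have := (le_abs_self _).trans hlog
    simp only [id, Real.norm_eq_abs, abs_of_pos hm'] at this
    linarith [mul_pos hC hm']
  calc (m : ℝ) * Real.logb b m < m * (C * m) := by gcongr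
    _ = C * (m : ℝ) ^ 2 := by ring

theorem stmt15_general (w : ℕ → Bool) (ε : ℝ) (hε1 : ε < 1) (N : ℕ)
    (hBeck : ∀ n : ℕ, N < n → ∀ i j : ℕ,
      factorAt w i n = factorAt w j n → i < j → (2 - ε) ^ n ≤ (j : ℝ) - (i : ℝ)) :
    ∀ C : ℝ, 0 < C → ∃ M : ℕ, ∀ m : ℕ, M ≤ m → ∀ i : ℕ,
      ((clCount (factorAt w i m) : ℝ) < C * (m : ℝ) ^ 2 ∧
       (clCount (factorAt w i m) : ℝ) ≤ (m : ℝ) * (Real.log m / Real.log (2 - ε))) := by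
  intro C hC
  have hb : 1 < 2 - ε := by linarith
  obtain ⟨M, hM⟩ := eventually_atTop.mp (eventually_le_logb_and_mul_logb_lt hb hC (max N 3))
  refine ⟨M, fun m hm i => ?_⟩
  obtain ⟨hL, hlt⟩ := hM m hm
  have hcount := IsBeck.clCount_factorAt_le (w := w) hb hBeck i m
    (le_of_max_le_left hL) (by norm_num; exact le_of_max_le_right hL)
  exact ⟨hcount.trans_lt hlt, hcount⟩

/-- an ε-Beck word (ε < 1) is not closed-rich: for every C > 0, all
sufficiently long factors of length m have fewer than C·m² closed factors; in fact at
most m·log_{2-ε} m distinct closed factors. -/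
theorem stmt15 (w : ℕ → Bool) (ε : ℝ) (hε0 : 0 < ε) (hε1 : ε < 1) (N : ℕ)
    (hBeck : ∀ n : ℕ, N < n → ∀ i j : ℕ,
      factorAt w i n = factorAt w j n → i < j → (2 - ε) ^ n ≤ (j : ℝ) - (i : ℝ)) :
    ∀ C : ℝ, 0 < C → ∃ M : ℕ, ∀ m : ℕ, M ≤ m → ∀ i : ℕ,
      ((clCount (factorAt w i m) : ℝ) < C * (m : ℝ) ^ 2 ∧
       (clCount (factorAt w i m) : ℝ) ≤ (m : ℝ) * (Real.log m / Real.log (2 - ε))) :=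
  stmt15_general w ε hε1 N hBeck
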